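/- arXiv:1905.09473 — 2 statements merged into one kernel-verified Lean document; each statement's English description precedes it below -/
import Mathlib

section
/- For every N ≥ 0, every sequence of modes b_0,b_1,…,b_N in ℐ with b_j ≠ b_{j−1} for all j, and every nondecreasing sequence of times t_1 ≤ ⋯ ≤ t_N in [0,T], one has Σ_{j=1}^N c_{b_{j−1},b_j}(t_j) ≥ ε·(N−m)/m. -/
open Finset

private lemma sum_Ioc_split (f : ℕ → ℝ) {a b c : ℕ} (hab : a ≤ b) (hbc : b ≤ c) :
    ∑ k ∈ Finset.Ioc a c, f k = ∑ k ∈ Finset.Ioc a b, f k + ∑ k ∈ Finset.Ioc b c, f k := by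
  rw [← Finset.sum_union (by
    rw [Finset.disjoint_left]; intro x hx hx'
    simp only [Finset.mem_Ioc] at hx hx'; omega),
    Finset.Ioc_union_Ioc_eq_Ioc hab hbc]

private lemma sum_Ioc_shift (f : ℕ → ℝ) (a b d : ℕ) :
    ∑ k ∈ Finset.Ioc a b, f (k + d) = ∑ k ∈ Finset.Ioc (a + d) (b + d), f k := by
  rw [← Finset.map_add_right_Ioc, Finset.sum_map]
  rfl

/-- **No-free-loop lower bound on accumulated switching costs.**
Let `ℐ = Fin m` (`m ≥ 2`) be a finite set of modes and, for each ordered pair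
of distinct modes, let `c b b' : [0,T] → [0,∞)` be a nonnegative function.
Assume the no-free-loop condition: there is `ε > 0` such that for every `n ≥ 2`,
every sequence `b_1,…,b_n` in `ℐ` with `b_{j+1} ≠ b_j` for `j < n` and
`b_1 ≠ b_n`, and all times `t_1 ≤ ⋯ ≤ t_n` in `[0,T]`,
`c_{b_1,b_2}(t_1) + ⋯ + c_{b_{n-1},b_n}(t_{n-1}) + c_{b_n,b_1}(t_n) ≥ ε`.
Then for every `N ≥ 0`, every sequence of modes `b_0,b_1,…,b_N` with
`b_j ≠ b_{j-1}` for all `j`, and every nondecreasing sequence of times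
`t_1 ≤ ⋯ ≤ t_N` in `[0,T]`, one has
`Σ_{j=1}^N c_{b_{j-1},b_j}(t_j) ≥ ε (N-m)/m`. -/
theorem cost_sum_lower_bound
    {m : ℕ} (hm : 2 ≤ m) (T : ℝ) (hT : 0 ≤ T)
    (c : Fin m → Fin m → ℝ → ℝ)
    (hc_nonneg : ∀ b b' t, 0 ≤ c b b' t)
    (ε : ℝ) (hε : 0 < ε)
    (hNFL : ∀ n : ℕ, 2 ≤ n → ∀ b : ℕ → Fin m,
      (∀ j, 1 ≤ j → j + 1 ≤ n → b (j+1) ≠ b j) → b 1 ≠ b n →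
      ∀ t : ℕ → ℝ, (∀ i j, 1 ≤ i → i ≤ j → j ≤ n → t i ≤ t j) →
      (∀ j, 1 ≤ j → j ≤ n → t j ∈ Set.Icc 0 T) →
      ε ≤ (∑ j ∈ Finset.Ico 1 n, c (b j) (b (j+1)) (t j)) + c (b n) (b 1) (t n)) :
    ∀ N : ℕ, ∀ b : ℕ → Fin m, (∀ j, 1 ≤ j → j ≤ N → b j ≠ b (j-1)) →
    ∀ t : ℕ → ℝ, (∀ i j, 1 ≤ i → i ≤ j → j ≤ N → t i ≤ t j) →
    (∀ j, 1 ≤ j → j ≤ N → t j ∈ Set.Icc 0 T) →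
    ε * ((N : ℝ) - (m : ℝ)) / (m : ℝ) ≤ ∑ j ∈ Finset.Icc 1 N, c (b (j-1)) (b j) (t j) := by
  have hm0 : (0 : ℝ) < (m : ℝ) := by positivity
  intro N
  induction N using Nat.strong_induction_on with
  | _ N IH =>
  intro b hb t hmono hmem
  by_cases hN : N ≤ m
  · -- trivial case: RHS of the bound is nonpositive, sum is nonnegative
    have h1 : ε * ((N : ℝ) - (m : ℝ)) / (m : ℝ) ≤ 0 := by
      apply div_nonpos_of_nonpos_of_nonneg _ hm0.le
      apply mul_nonpos_of_nonneg_of_nonpos hε.le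
      have : (N : ℝ) ≤ (m : ℝ) := by exact_mod_cast hN
      linarith
    exact h1.trans (Finset.sum_nonneg fun k _ => hc_nonneg _ _ _)
  · push_neg at hN
    -- pigeonhole: find i < j ≤ m with b i = b j
    have hpig : ∃ i j : ℕ, i < j ∧ j ≤ m ∧ b i = b j := by
      obtain ⟨i, hi, j, hj, hij, hbij⟩ :=
        Finset.exists_ne_map_eq_of_card_lt_of_maps_to
          (s := Finset.range (m+1)) (t := (Finset.univ : Finset (Fin m)))
          (by simp) (fun k _ => Finset.mem_univ (b k))
      simp only [Finset.mem_range] at hi hj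
      rcases lt_or_gt_of_ne hij with h | h
      · exact ⟨i, j, h, by omega, hbij⟩
      · exact ⟨j, i, h, by omega, hbij.symm⟩
    obtain ⟨i, j, hij, hjm, hbij⟩ := hpig
    obtain ⟨d, rfl⟩ : ∃ d, j = i + d := ⟨j - i, by omega⟩
    have hd1 : 1 ≤ d := by omega
    have hd2 : 2 ≤ d := by
      by_contra h
      have hdone : d = 1 := by omega
      have h2 := hb (i + d) (by omega) (by omega)
      have e : i + d - 1 = i := by omega
      rw [e] at h2
      exact h2 hbij.symm
    have hjN : i + d < N := by omega
    set f : ℕ → ℝ := fun k => c (b (k-1)) (b k) (t k) with hf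
    -- the loop bound from hNFL
    have hcyc : ε ≤ ∑ k ∈ Finset.Ioc i (i + d), f k := by
      have hB1 : ∀ k, 1 ≤ k → k + 1 ≤ d → b (i + (k+1) - 1) ≠ b (i + k - 1) := by
        intro k hk1 hkd
        have e1 : i + (k+1) - 1 = i + k := by omega
        have e2 : i + k - 1 = i + k - 1 := rfl
        rw [e1]
        have h2 := hb (i + k) (by omega) (by omega)
        exact h2
      have hB2 : b (i + 1 - 1) ≠ b (i + d - 1) := by
        have e1 : i + 1 - 1 = i := by omega
        rw [e1, hbij]
        have h2 := hb (i + d) (by omega) (by omega)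
        exact h2
      have hkey : ε ≤ (∑ k ∈ Finset.Ico 1 d,
            c (b (i + k - 1)) (b (i + (k+1) - 1)) (t (i + k)))
          + c (b (i + d - 1)) (b (i + 1 - 1)) (t (i + d)) :=
        hNFL d hd2 (fun k => b (i + k - 1)) hB1 hB2 (fun k => t (i + k))
          (fun a b' ha hab hbd => hmono (i+a) (i+b') (by omega) (by omega) (by omega))
          (fun k hk1 hkd => hmem (i+k) (by omega) (by omega))
      have hterm : ∑ k ∈ Finset.Ico 1 d,
            c (b (i + k - 1)) (b (i + (k+1) - 1)) (t (i + k))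
          = ∑ k ∈ Finset.Ico 1 d, f (i + k) := by
        apply Finset.sum_congr rfl
        intro k hk
        simp only [Finset.mem_Ico] at hk
        simp only [hf]
        have e1 : i + (k+1) - 1 = i + k := by omega
        rw [e1]
      have hlast : c (b (i + d - 1)) (b (i + 1 - 1)) (t (i + d)) = f (i + d) := by
        simp only [hf]
        have e1 : i + 1 - 1 = i := by omega
        rw [e1, hbij]
      rw [hterm, hlast] at hkey
      refine hkey.trans (le_of_eq ?_)
      have e0 : Finset.Ioc i (i + d) = Finset.Ioc (0 + i) (d + i) := by
        congr 1 <;> omega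
      rw [e0, ← sum_Ioc_shift f 0 d i]
      have e1 : Finset.Ioc 0 d = Finset.Ico 1 (d+1) := by
        ext x; simp only [Finset.mem_Ioc, Finset.mem_Ico]; omega
      rw [e1, Finset.sum_Ico_succ_top (by omega : 1 ≤ d)]
      congr 1
      · exact Finset.sum_congr rfl fun k _ => by rw [Nat.add_comm k i]
      · rw [Nat.add_comm d i]
    -- the spliced sequence
    have hdN : d ≤ N := by omega
    have hN2lt : N - d < N := by omega
    have hiN2 : i ≤ N - d := by omega
    set b2 : ℕ → Fin m := fun k => if k ≤ i then b k else b (k + d) with hb2def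
    set t2 : ℕ → ℝ := fun k => if k ≤ i then t k else t (k + d) with ht2def
    have hsplice := IH (N - d) hN2lt b2
      (fun k hk1 hkN2 => by
        simp only [hb2def]
        rcases Nat.lt_or_ge i k with h | h
        · rw [if_neg (by omega)]
          rcases Nat.eq_or_lt_of_le h with h' | h'
          · -- k = i + 1
            have hk' : k = i + 1 := by omega
            rw [if_pos (by omega : k - 1 ≤ i)]
            have e1 : k - 1 = i := by omega
            rw [e1, hbij]
            have h2 := hb (k + d) (by omega) (by omega)
            have e2 : k + d - 1 = i + d := by omega
            rwa [e2] at h2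
          · rw [if_neg (by omega : ¬ k - 1 ≤ i)]
            have h2 := hb (k + d) (by omega) (by omega)
            have e : k + d - 1 = k - 1 + d := by omega
            rwa [e] at h2
        · rw [if_pos h, if_pos (by omega)]
          exact hb k hk1 (by omega))
      t2
      (fun a b' ha hab hbN2 => by
        simp only [ht2def]
        split <;> split
        · exact hmono a b' ha hab (by omega)
        · exact hmono a (b'+d) ha (by omega) (by omega)
        · omega
        · exact hmono (a+d) (b'+d) (by omega) (by omega) (by omega))
      (fun k hk1 hkN2 => by
        simp only [ht2def]
        split
        · exact hmem k hk1 (by omega)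
        · exact hmem (k+d) (by omega) (by omega))
    -- identify the spliced sum
    have hsum2 : ∑ k ∈ Finset.Icc 1 (N - d), c (b2 (k-1)) (b2 k) (t2 k)
        = ∑ k ∈ Finset.Ioc 0 i, f k + ∑ k ∈ Finset.Ioc (i + d) N, f k := by
      have hicc : Finset.Icc 1 (N - d) = Finset.Ioc 0 (N - d) := by
        ext x; simp only [Finset.mem_Icc, Finset.mem_Ioc]; omega
      rw [hicc, sum_Ioc_split _ (Nat.zero_le i) hiN2]
      congr 1
      · apply Finset.sum_congr rfl
        intro k hk
        simp only [Finset.mem_Ioc] at hk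
        simp only [hb2def, ht2def, hf, if_pos hk.2, if_pos (by omega : k - 1 ≤ i)]
      · have h1 : ∑ k ∈ Finset.Ioc i (N - d), c (b2 (k-1)) (b2 k) (t2 k)
            = ∑ k ∈ Finset.Ioc i (N - d), f (k + d) := by
          apply Finset.sum_congr rfl
          intro k hk
          simp only [Finset.mem_Ioc] at hk
          simp only [hb2def, ht2def, hf, if_neg (by omega : ¬ k ≤ i)]
          rcases Nat.eq_or_lt_of_le hk.1 with h' | h'
          · rw [if_pos (by omega : k - 1 ≤ i)]
            have e1 : k - 1 = i := by omega
            have e2 : k + d - 1 = i + d := by omega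
            rw [e1, e2, hbij]
          · rw [if_neg (by omega : ¬ k - 1 ≤ i)]
            have e : k - 1 + d = k + d - 1 := by omega
            rw [e]
        rw [h1, sum_Ioc_shift]
        have e : N - d + d = N := by omega
        rw [e]
    -- put everything together
    have htotal : ∑ k ∈ Finset.Icc 1 N, f k
        = ∑ k ∈ Finset.Ioc 0 i, f k + ∑ k ∈ Finset.Ioc i (i + d), f k
          + ∑ k ∈ Finset.Ioc (i + d) N, f k := by
      have hicc : Finset.Icc 1 N = Finset.Ioc 0 N := by
        ext x; simp only [Finset.mem_Icc, Finset.mem_Ioc]; omega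
      rw [hicc, sum_Ioc_split f (Nat.zero_le (i + d)) hjN.le,
        sum_Ioc_split f (Nat.zero_le i) (by omega : i ≤ i + d)]
    have hfinal : ε * ((N : ℝ) - (m : ℝ)) / (m : ℝ)
        ≤ ε * (((N - d : ℕ) : ℝ) - (m : ℝ)) / (m : ℝ) + ε := by
      have hcast : ((N - d : ℕ) : ℝ) = (N : ℝ) - (d : ℝ) := by
        push_cast [Nat.cast_sub hdN]; ring
      rw [hcast, div_add' _ _ _ hm0.ne', div_le_div_iff₀ hm0 hm0]
      have hdm : (d : ℝ) ≤ (m : ℝ) := by exact_mod_cast (by omega : d ≤ m)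
      nlinarith [mul_nonneg hε.le (sub_nonneg.mpr hdm), hm0]
    calc ε * ((N : ℝ) - (m : ℝ)) / (m : ℝ)
        ≤ ε * (((N - d : ℕ) : ℝ) - (m : ℝ)) / (m : ℝ) + ε := hfinal
      _ ≤ (∑ k ∈ Finset.Ioc 0 i, f k + ∑ k ∈ Finset.Ioc (i + d) N, f k)
            + ∑ k ∈ Finset.Ioc i (i + d), f k := by
          rw [← hsum2]; exact add_le_add hsplice hcyc
      _ = ∑ k ∈ Finset.Icc 1 N, f k := by rw [htotal]; ring
end

section
/- Let θ ∈ 𝒯, let A_1,…,A_n ∈ ℱ_θ be a finite measurable partition of Ω, and for each i let U^i be a càdlàg adapted class-[D] process with Snell envelope Z^i. Then on the time interval [θ,T] the process Σ_{i=1}^n 1_{A_i} Z^i is a càdlàg supermartingale dominating Σ_{i=1}^n 1_{A_i} U^i, and it is the smallest such: any càdlàg supermartingale on [θ,T] dominating Σ_{i=1}^n 1_{A_i} U^i on [θ,T] also dominates Σ_{i=1}^n 1_{A_i} Z^i there. In other words, Σ 1_{A_i} Z^i is the Snell envelope of Σ 1_{A_i} U^i on [θ,T]. -/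
open MeasureTheory Filter Set
open scoped ENNReal NNReal ENat

noncomputable section

namespace OptSwitch

/-- A real-valued function is càdlàg on `[0,T]`: right-continuous on `[0,T)`
(along points of `[0,T]`) and with finite left limits on `(0,T]`. -/
def CadlagOn (f : ℝ → ℝ) (T : ℝ) : Prop :=
  (∀ t ∈ Set.Ico (0:ℝ) T,
      Tendsto f (nhdsWithin t (Set.Ioi t ∩ Set.Icc 0 T)) (nhds (f t))) ∧
  (∀ t ∈ Set.Ioc (0:ℝ) T,
      ∃ L : ℝ, Tendsto f (nhdsWithin t (Set.Iio t ∩ Set.Icc 0 T)) (nhds L))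

variable {Ω : Type} [m0 : MeasurableSpace Ω]

/-- The filtration is right-continuous. -/
def FiltrationRC (𝓕 : Filtration ℝ m0) : Prop :=
  ∀ t : ℝ, (⨅ s ∈ Set.Ioi t, (𝓕 s : MeasurableSpace Ω)) = 𝓕 t

/-- The filtration is complete: every `μ`-null set belongs to every `𝓕 t`. -/
def FiltrationComplete (𝓕 : Filtration ℝ m0) (μ : Measure Ω) : Prop :=
  ∀ (t : ℝ) (s : Set Ω), μ s = 0 → MeasurableSet[𝓕 t] s

/-- Quasi-left continuity of the filtration: `ℱ_γ = ℱ_{γ-}` for predictable `γ`,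
expressed via announcing sequences. -/
def FiltrationQLC (𝓕 : Filtration ℝ m0) : Prop :=
  ∀ (γ : Ω → ℝ) (γk : ℕ → Ω → ℝ) (hγ : IsStoppingTime 𝓕 (fun ω => (γ ω : WithTop ℝ)))
    (hγk : ∀ k, IsStoppingTime 𝓕 (fun ω => (γk k ω : WithTop ℝ))),
    (∀ ω, Monotone fun k => γk k ω) →
    (∀ ω, Tendsto (fun k => γk k ω) atTop (nhds (γ ω))) →
    (∀ ω, 0 < γ ω → ∀ k, γk k ω < γ ω) →
    hγ.measurableSpace ≤ ⨆ k, (hγk k).measurableSpace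

/-- A `[0,T]`-valued stopping time is predictable if it admits an announcing sequence. -/
def IsPredictableST (𝓕 : Filtration ℝ m0) (γ : Ω → ℝ) : Prop :=
  IsStoppingTime 𝓕 (fun ω => (γ ω : WithTop ℝ)) ∧
  ∃ γk : ℕ → Ω → ℝ, (∀ k, IsStoppingTime 𝓕 (fun ω => (γk k ω : WithTop ℝ))) ∧
    (∀ ω, Monotone fun k => γk k ω) ∧
    (∀ ω, Tendsto (fun k => γk k ω) atTop (nhds (γ ω))) ∧
    ∀ ω, 0 < γ ω → ∀ k, γk k ω < γ ω

/-- A process `X` (restricted to `[0,T]`) is quasi-left continuous: for every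
predictable stopping time `γ` and every announcing sequence `γk` of stopping
times, `X_{γ_k} → X_γ` a.s. -/
def QLCProc (𝓕 : Filtration ℝ m0) (μ : Measure Ω) (T : ℝ) (X : ℝ → Ω → ℝ) : Prop :=
  ∀ (γ : Ω → ℝ) (γk : ℕ → Ω → ℝ),
    IsStoppingTime 𝓕 (fun ω => (γ ω : WithTop ℝ)) → (∀ ω, γ ω ∈ Set.Icc 0 T) →
    (∀ k, IsStoppingTime 𝓕 (fun ω => (γk k ω : WithTop ℝ))) → (∀ k ω, γk k ω ∈ Set.Icc 0 T) →
    (∀ ω, Monotone fun k => γk k ω) →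
    (∀ ω, Tendsto (fun k => γk k ω) atTop (nhds (γ ω))) →
    (∀ ω, 0 < γ ω → ∀ k, γk k ω < γ ω) →
    ∀ᵐ ω ∂μ, Tendsto (fun k => X (γk k ω) ω) atTop (nhds (X (γ ω) ω))

/-- Adaptedness on `[0,T]`. -/
def AdaptedOn (𝓕 : Filtration ℝ m0) (T : ℝ) (X : ℝ → Ω → ℝ) : Prop :=
  ∀ t ∈ Set.Icc (0:ℝ) T, StronglyMeasurable[𝓕 t] (X t)

/-- Class [D]: the family `{X_τ : τ a [0,T]-valued stopping time}` is uniformly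
integrable. -/
def IsClassD (𝓕 : Filtration ℝ m0) (μ : Measure Ω) (T : ℝ) (X : ℝ → Ω → ℝ) : Prop :=
  UniformIntegrable
    (fun τ : {τ : Ω → ℝ // IsStoppingTime 𝓕 (fun ω => (τ ω : WithTop ℝ)) ∧ ∀ ω, τ ω ∈ Set.Icc 0 T} =>
      fun ω => X (τ.1 ω) ω) 1 μ

/-- A càdlàg adapted process of class [D] on `[0,T]`. -/
def IsCadlagAdaptedClassD (𝓕 : Filtration ℝ m0) (μ : Measure Ω) (T : ℝ)
    (X : ℝ → Ω → ℝ) : Prop :=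
  (∀ ω, CadlagOn (fun t => X t ω) T) ∧ AdaptedOn 𝓕 T X ∧ IsClassD 𝓕 μ T X

/-- Supermartingale on `[0,T]`. -/
def IsSupermartingaleOn (𝓕 : Filtration ℝ m0) (μ : Measure Ω) (T : ℝ)
    (X : ℝ → Ω → ℝ) : Prop :=
  AdaptedOn 𝓕 T X ∧ (∀ t ∈ Set.Icc (0:ℝ) T, Integrable (X t) μ) ∧
  ∀ s t : ℝ, s ∈ Set.Icc (0:ℝ) T → t ∈ Set.Icc (0:ℝ) T → s ≤ t →
    condExp (𝓕 s) μ (X t) ≤ᵐ[μ] X s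

/-- `Z` is the Snell envelope of `U` on `[0,T]`: the smallest càdlàg
supermartingale dominating `U`. -/
def IsSnellEnvelope (𝓕 : Filtration ℝ m0) (μ : Measure Ω) (T : ℝ)
    (U Z : ℝ → Ω → ℝ) : Prop :=
  (∀ ω, CadlagOn (fun t => Z t ω) T) ∧ IsSupermartingaleOn 𝓕 μ T Z ∧
  (∀ t ∈ Set.Icc (0:ℝ) T, U t ≤ᵐ[μ] Z t) ∧
  ∀ W : ℝ → Ω → ℝ, (∀ ω, CadlagOn (fun t => W t ω) T) →
    IsSupermartingaleOn 𝓕 μ T W → (∀ t ∈ Set.Icc (0:ℝ) T, U t ≤ᵐ[μ] W t) →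
    ∀ t ∈ Set.Icc (0:ℝ) T, Z t ≤ᵐ[μ] W t


open MeasureTheory

variable {Ω : Type} [mΩ : MeasurableSpace Ω]

section Aux

variable {Ω : Type} [mΩ : MeasurableSpace Ω]

/-- A.e. adaptedness of `X` on `{θ ≤ q}` from the one-step condExp inequality. -/
lemma ae_eq_condexp_on_le (μ : Measure Ω) [IsFiniteMeasure μ] (𝓕 : Filtration ℝ mΩ)
    {θ : Ω → ℝ} (hθ : IsStoppingTime 𝓕 (fun ω => (θ ω : WithTop ℝ))) {Xq : Ω → ℝ} (q : ℝ)
    (hint : Integrable Xq μ)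
    (hle : ∀ᵐ ω ∂μ, θ ω ≤ q → condExp (𝓕 q) μ Xq ω ≤ Xq ω) :
    ∀ᵐ ω ∂μ, θ ω ≤ q → Xq ω = condExp (𝓕 q) μ Xq ω := by
  set Gq := condExp (𝓕 q) μ Xq with hGq
  have hm : 𝓕 q ≤ mΩ := 𝓕.le q
  haveI : SigmaFinite (μ.trim hm) := inferInstance
  have hC : MeasurableSet[𝓕 q] {ω | θ ω ≤ q} := by
    simpa only [WithTop.coe_le_coe] using hθ q
  have hCm : MeasurableSet {ω | θ ω ≤ q} := hm _ hC
  have hGint : Integrable Gq μ := integrable_condExp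
  have hsub : Integrable (fun ω => Xq ω - Gq ω) μ := hint.sub hGint
  have hkey : ∫ ω in {ω | θ ω ≤ q}, (Xq ω - Gq ω) ∂μ = 0 := by
    rw [integral_sub hint.integrableOn hGint.integrableOn,
      setIntegral_condExp hm hint hC]
    ring
  have hnn : 0 ≤ᵐ[μ] ({ω | θ ω ≤ q}).indicator (fun ω => Xq ω - Gq ω) := by
    filter_upwards [hle] with ω h
    by_cases hc : ω ∈ {ω | θ ω ≤ q}
    · simpa [Set.indicator_of_mem hc, sub_nonneg] using h hc
    · simp [Set.indicator_of_notMem hc]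
  have hi2 : Integrable (({ω | θ ω ≤ q}).indicator (fun ω => Xq ω - Gq ω)) μ :=
    hsub.indicator hCm
  have h0 : ∫ ω, ({ω | θ ω ≤ q}).indicator (fun ω => Xq ω - Gq ω) ω ∂μ = 0 := by
    rw [integral_indicator hCm]; exact hkey
  have hz := (integral_eq_zero_iff_of_nonneg_ae hnn hi2).1 h0
  filter_upwards [hz] with ω h hθq
  have : Xq ω - Gq ω = 0 := by
    have := Set.indicator_of_mem (show ω ∈ {ω | θ ω ≤ q} from hθq)
      (fun ω => Xq ω - Gq ω)
    rw [← this]; exact h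
  linarith

end Aux
/-- **Gluing Snell envelopes along an `ℱ_θ`-measurable partition.**
Let `θ ∈ 𝒯`, let `A_1,…,A_n ∈ ℱ_θ` be a finite measurable partition of `Ω`,
and for each `i` let `U^i` be a càdlàg adapted class-[D] process with Snell
envelope `Z^i`.  Then on `[θ,T]` the process `Σ_i 1_{A_i} Z^i` is a càdlàg
supermartingale dominating `Σ_i 1_{A_i} U^i`, and it is the smallest such:
any càdlàg supermartingale on `[θ,T]` dominating `Σ_i 1_{A_i} U^i` on `[θ,T]`
also dominates `Σ_i 1_{A_i} Z^i` there.  In other words, `Σ_i 1_{A_i} Z^i` is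
the Snell envelope of `Σ_i 1_{A_i} U^i` on `[θ,T]`. -/
theorem snell_envelope_partition_glue
    (μ : Measure Ω) (hμ : IsProbabilityMeasure μ) (T : ℝ) (hT : 0 < T)
    (𝓕 : Filtration ℝ mΩ)
    (hrc : FiltrationRC 𝓕) (hcomp : FiltrationComplete 𝓕 μ)
    (hqlcF : FiltrationQLC 𝓕)
    (θ : Ω → ℝ) (hθ : IsStoppingTime 𝓕 (fun ω => (θ ω : WithTop ℝ))) (hθmem : ∀ ω, θ ω ∈ Set.Icc 0 T)
    (n : ℕ) (A : Fin n → Set Ω)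
    (hAmeas : ∀ i, MeasurableSet[hθ.measurableSpace] (A i))
    (hAdisj : Pairwise (Function.onFun Disjoint A))
    (hAcover : (⋃ i, A i) = Set.univ)
    (U Z : Fin n → ℝ → Ω → ℝ)
    (hU : ∀ i, IsCadlagAdaptedClassD 𝓕 μ T (U i))
    (hZ : ∀ i, IsSnellEnvelope 𝓕 μ T (U i) (Z i)) :
    -- `Σ_i 1_{A_i} Z^i` has càdlàg paths
    (∀ ω, CadlagOn (fun t => ∑ i, Set.indicator (A i) (fun _ => Z i t ω) ω) T) ∧
    -- it is integrable on `[0,T]`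
    (∀ t ∈ Set.Icc (0:ℝ) T,
      Integrable (fun ω => ∑ i, Set.indicator (A i) (fun _ => Z i t ω) ω) μ) ∧
    -- it is a supermartingale on `[θ,T]`
    (∀ s t : ℝ, s ∈ Set.Icc (0:ℝ) T → t ∈ Set.Icc (0:ℝ) T → s ≤ t →
      ∀ᵐ ω ∂μ, θ ω ≤ s →
        condExp (𝓕 s) μ (fun ω' => ∑ i, Set.indicator (A i) (fun _ => Z i t ω') ω') ω
          ≤ ∑ i, Set.indicator (A i) (fun _ => Z i s ω) ω) ∧
    -- it dominates `Σ_i 1_{A_i} U^i` on `[θ,T]`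
    (∀ t ∈ Set.Icc (0:ℝ) T, ∀ᵐ ω ∂μ, θ ω ≤ t →
      ∑ i, Set.indicator (A i) (fun _ => U i t ω) ω
        ≤ ∑ i, Set.indicator (A i) (fun _ => Z i t ω) ω) ∧
    -- and it is the smallest such càdlàg supermartingale on `[θ,T]`
    (∀ X : ℝ → Ω → ℝ,
      (∀ ω, CadlagOn (fun t => X t ω) T) →
      (∀ t ∈ Set.Icc (0:ℝ) T, Integrable (X t) μ) →
      (∀ s t : ℝ, s ∈ Set.Icc (0:ℝ) T → t ∈ Set.Icc (0:ℝ) T → s ≤ t →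
        ∀ᵐ ω ∂μ, θ ω ≤ s → condExp (𝓕 s) μ (X t) ω ≤ X s ω) →
      (∀ t ∈ Set.Icc (0:ℝ) T, ∀ᵐ ω ∂μ, θ ω ≤ t →
        ∑ i, Set.indicator (A i) (fun _ => U i t ω) ω ≤ X t ω) →
      ∀ t ∈ Set.Icc (0:ℝ) T, ∀ᵐ ω ∂μ, θ ω ≤ t →
        ∑ i, Set.indicator (A i) (fun _ => Z i t ω) ω ≤ X t ω) := by
  classical
  haveI := hμ
  have hθ' : ∀ q : ℝ, MeasurableSet[𝓕 q] {ω | θ ω ≤ q} := fun q => by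
    simpa only [WithTop.coe_le_coe] using hθ q
  have hAmeas' : ∀ i q, MeasurableSet[𝓕 q] (A i ∩ {ω | θ ω ≤ q}) := fun i q => by
    simpa only [WithTop.coe_le_coe] using (hAmeas i).2 q
  -- basic facts
  have hAm : ∀ i, MeasurableSet (A i) := by
    intro i
    have h1 : A i ∩ {ω | θ ω ≤ T} = A i := by
      ext ω; simp [(hθmem ω).2]
    have := (𝓕.le T) _ (hAmeas' i T)
    rwa [h1] at this
  have hZcad : ∀ i, ∀ ω, CadlagOn (fun t => Z i t ω) T := fun i => (hZ i).1
  have hZad : ∀ i, AdaptedOn 𝓕 T (Z i) := fun i => (hZ i).2.1.1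
  have hZint : ∀ i, ∀ t ∈ Set.Icc (0:ℝ) T, Integrable (Z i t) μ := fun i => (hZ i).2.1.2.1
  have hZsuper := fun i => (hZ i).2.1.2.2
  have hZdom := fun i => (hZ i).2.2.1
  have hZmin := fun i => (hZ i).2.2.2
  have hind : ∀ (B : Set Ω) (g : Ω → ℝ) (ω : Ω),
      Set.indicator B (fun _ => g ω) ω = Set.indicator B g ω := by
    intro B g ω; simp [Set.indicator_apply]
  refine ⟨?_, ?_, ?_, ?_, ?_⟩
  · -- cadlag paths
    intro ω
    constructor
    · intro t ht
      simp only [Set.indicator_apply]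
      apply tendsto_finset_sum
      intro i _
      by_cases h : ω ∈ A i
      · simp only [if_pos h]
        exact (hZcad i ω).1 t ht
      · simp only [if_neg h]
        exact tendsto_const_nhds
    · intro t ht
      have hL : ∀ i : Fin n, ∃ L, Tendsto (fun u => Z i u ω)
          (nhdsWithin t (Set.Iio t ∩ Set.Icc 0 T)) (nhds L) :=
        fun i => (hZcad i ω).2 t ht
      choose L hLt using hL
      refine ⟨∑ i, if ω ∈ A i then L i else 0, ?_⟩
      simp only [Set.indicator_apply]
      apply tendsto_finset_sum
      intro i _
      by_cases h : ω ∈ A i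
      · simp only [if_pos h]; exact hLt i
      · simp only [if_neg h]; exact tendsto_const_nhds
  · -- integrability
    intro t ht
    have heq : (fun ω => ∑ i, Set.indicator (A i) (fun _ => Z i t ω) ω)
        = fun ω => ∑ i, Set.indicator (A i) (Z i t) ω := by
      funext ω; exact Finset.sum_congr rfl fun i _ => hind _ _ ω
    rw [heq]
    exact integrable_finset_sum _ fun i _ => ((hZint i t ht).indicator (hAm i))
  · -- supermartingale on [θ,T]
    intro s t hs ht hst
    have hm : 𝓕 s ≤ mΩ := 𝓕.le s
    haveI : SigmaFinite (μ.trim hm) := inferInstance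
    set f : Ω → ℝ := fun ω => ∑ i, Set.indicator (A i) (fun _ => Z i t ω) ω with hf
    have hfeq : f = fun ω => ∑ i, Set.indicator (A i) (Z i t) ω := by
      funext ω; exact Finset.sum_congr rfl fun i _ => hind _ _ ω
    have hfint : Integrable f μ := by
      rw [hfeq]
      exact integrable_finset_sum _ fun i _ => ((hZint i t ht).indicator (hAm i))
    set C := {ω | θ ω ≤ s} with hCdef
    have hC : MeasurableSet[𝓕 s] C := hθ' s
    have hBi : ∀ i : Fin n, MeasurableSet[𝓕 s] (A i ∩ C) := fun i => hAmeas' i s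
    -- identify C.indicator f with a sum of indicators
    have hCind : C.indicator f = fun ω => ∑ i, (A i ∩ C).indicator (Z i t) ω := by
      funext ω
      by_cases hc : ω ∈ C
      · rw [Set.indicator_of_mem hc, hfeq]
        refine Finset.sum_congr rfl fun i _ => ?_
        by_cases h : ω ∈ A i
        · rw [Set.indicator_of_mem h, Set.indicator_of_mem (Set.mem_inter h hc)]
        · rw [Set.indicator_of_notMem h,
            Set.indicator_of_notMem (fun hh => h hh.1)]
      · rw [Set.indicator_of_notMem hc]
        symm
        refine Finset.sum_eq_zero fun i _ => ?_
        exact Set.indicator_of_notMem (fun hh => hc hh.2) _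
    have h1 : condExp (𝓕 s) μ (C.indicator f) =ᵐ[μ] C.indicator (condExp (𝓕 s) μ f) :=
      condExp_indicator hfint hC
    have h2 : condExp (𝓕 s) μ (C.indicator f)
        =ᵐ[μ] fun ω => ∑ i, (A i ∩ C).indicator (condExp (𝓕 s) μ (Z i t)) ω := by
      rw [hCind]
      have hsum_eq : (fun ω => ∑ i, (A i ∩ C).indicator (Z i t) ω)
          = ∑ i : Fin n, (A i ∩ C).indicator (Z i t) := by
        funext ω; rw [Finset.sum_apply]
      rw [hsum_eq]
      refine (condExp_finsetSum (m := 𝓕 s) fun i _ => (hZint i t ht).indicator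
        (hm _ (hBi i))).trans ?_
      have h3 : ∀ i : Fin n, condExp (𝓕 s) μ ((A i ∩ C).indicator (Z i t))
          =ᵐ[μ] (A i ∩ C).indicator (condExp (𝓕 s) μ (Z i t)) :=
        fun i => condExp_indicator (hZint i t ht) (hBi i)
      have h4 : ∀ᵐ ω ∂μ, ∀ i : Fin n, condExp (𝓕 s) μ ((A i ∩ C).indicator (Z i t)) ω
          = (A i ∩ C).indicator (condExp (𝓕 s) μ (Z i t)) ω := ae_all_iff.2 h3
      filter_upwards [h4] with ω h4ω
      rw [Finset.sum_apply]
      exact Finset.sum_congr rfl fun i _ => h4ω i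
    have h5 : ∀ᵐ ω ∂μ, ∀ i : Fin n, condExp (𝓕 s) μ (Z i t) ω ≤ Z i s ω :=
      ae_all_iff.2 fun i => hZsuper i s t hs ht hst
    filter_upwards [h1, h2, h5] with ω h1ω h2ω h5ω hθs
    have hc : ω ∈ C := hθs
    have hval : condExp (𝓕 s) μ f ω = ∑ i, (A i ∩ C).indicator (condExp (𝓕 s) μ (Z i t)) ω := by
      have := h1ω.symm.trans h2ω
      rwa [Set.indicator_of_mem hc] at this
    rw [hval]
    refine Finset.sum_le_sum fun i _ => ?_
    rw [hind]
    by_cases h : ω ∈ A i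
    · rw [Set.indicator_of_mem (Set.mem_inter h hc), Set.indicator_of_mem h]
      exact h5ω i
    · rw [Set.indicator_of_notMem (fun hh => h hh.1), Set.indicator_of_notMem h]
  · -- domination
    intro t ht
    have hall : ∀ᵐ ω ∂μ, ∀ i, U i t ω ≤ Z i t ω := ae_all_iff.2 fun i => hZdom i t ht
    filter_upwards [hall] with ω hω hθt
    refine Finset.sum_le_sum fun i _ => ?_
    rw [hind, hind]
    by_cases h : ω ∈ A i
    · rw [Set.indicator_of_mem h, Set.indicator_of_mem h]; exact hω i
    · rw [Set.indicator_of_notMem h, Set.indicator_of_notMem h]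
  · -- minimality
    intro X hXc hXi hXs hXd
    suffices H : ∀ i : Fin n, ∀ t ∈ Set.Icc (0:ℝ) T,
        ∀ᵐ ω ∂μ, θ ω ≤ t → ω ∈ A i → Z i t ω ≤ X t ω by
      intro t ht
      have hall : ∀ᵐ ω ∂μ, ∀ i : Fin n, θ ω ≤ t → ω ∈ A i → Z i t ω ≤ X t ω :=
        ae_all_iff.2 fun i => H i t ht
      filter_upwards [hall] with ω hω hθt
      obtain ⟨j, hj⟩ : ∃ j, ω ∈ A j := by
        have : ω ∈ ⋃ i, A i := hAcover ▸ Set.mem_univ ω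
        exact Set.mem_iUnion.1 this
      have hsum : ∑ i, Set.indicator (A i) (fun _ => Z i t ω) ω = Z j t ω := by
        rw [Finset.sum_eq_single j]
        · rw [hind, Set.indicator_of_mem hj]
        · intro b _ hbj
          rw [hind]
          refine Set.indicator_of_notMem ?_ _
          exact fun hb => Set.disjoint_left.1 (hAdisj hbj) hb hj
        · intro hj'; exact absurd (Finset.mem_univ j) hj'
      rw [hsum]
      exact hω j hθt hj
    intro i
    -- a.e. identification of X with its conditional expectation on {θ ≤ q}
    have hAE : ∀ q ∈ Set.Icc (0:ℝ) T, ∀ᵐ ω ∂μ, θ ω ≤ q →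
        X q ω = condExp (𝓕 q) μ (X q) ω := fun q hq =>
      ae_eq_condexp_on_le μ 𝓕 hθ q (hXi q hq) (hXs q q hq hq le_rfl)
    -- the exceptional null set
    have hcount : ∀ᵐ ω ∂μ, (∀ q : ℚ, (q : ℝ) ∈ Set.Icc (0:ℝ) T → θ ω ≤ q →
        X q ω = condExp (𝓕 (q:ℝ)) μ (X q) ω) ∧
        (θ ω ≤ T → X T ω = condExp (𝓕 T) μ (X T) ω) := by
      refine (ae_all_iff.2 fun q : ℚ => ?_).and (hAE T ⟨le_of_lt hT, le_rfl⟩)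
      by_cases hq : (q : ℝ) ∈ Set.Icc (0:ℝ) T
      · filter_upwards [hAE q hq] with ω h hq' hθq
        exact h hθq
      · filter_upwards with ω hq' hθq
        exact absurd hq' hq
    set Bad := {ω | ¬ ((∀ q : ℚ, (q : ℝ) ∈ Set.Icc (0:ℝ) T → θ ω ≤ q →
        X q ω = condExp (𝓕 (q:ℝ)) μ (X q) ω) ∧
        (θ ω ≤ T → X T ω = condExp (𝓕 T) μ (X T) ω))} with hBadDef
    have hBadNull : μ Bad = 0 := ae_iff.1 hcount
    set N := toMeasurable μ Bad with hNdef
    have hNnull : μ N = 0 := by rw [measure_toMeasurable]; exact hBadNull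
    have hNm : MeasurableSet N := measurableSet_toMeasurable μ Bad
    have hNgood : ∀ ω, ω ∉ N → (∀ q : ℚ, (q : ℝ) ∈ Set.Icc (0:ℝ) T → θ ω ≤ q →
        X q ω = condExp (𝓕 (q:ℝ)) μ (X q) ω) ∧
        (θ ω ≤ T → X T ω = condExp (𝓕 T) μ (X T) ω) := by
      intro ω h
      by_contra hc
      exact h (subset_toMeasurable μ Bad hc)
    have hNF : ∀ t : ℝ, MeasurableSet[𝓕 t] N := fun t => hcomp t N hNnull
    -- the good region
    set S : ℝ → Set Ω := fun t => (A i ∩ {ω | θ ω ≤ t}) ∩ Nᶜ with hSdef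
    have hSF : ∀ t : ℝ, MeasurableSet[𝓕 t] (S t) := fun t =>
      (hAmeas' i t).inter (hNF t).compl
    have hSm : ∀ t : ℝ, MeasurableSet (S t) := fun t => 𝓕.le t _ (hSF t)
    have hSmono : ∀ s t : ℝ, s ≤ t → S s ⊆ S t := by
      intro s t hst ω hω
      exact ⟨⟨hω.1.1, le_trans hω.1.2 hst⟩, hω.2⟩
    have hSmem : ∀ t ω, ω ∈ S t ↔ (ω ∈ A i ∧ θ ω ≤ t ∧ ω ∉ N) := by
      intro t ω
      constructor
      · exact fun h => ⟨h.1.1, h.1.2, h.2⟩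
      · exact fun h => ⟨⟨h.1, h.2.1⟩, h.2.2⟩
    -- the comparison process
    set W : ℝ → Ω → ℝ := fun t ω => if ω ∈ S t then min (X t ω) (Z i t ω) else Z i t ω
      with hWdef
    have hWleZ : ∀ t ω, W t ω ≤ Z i t ω := by
      intro t ω
      by_cases h : ω ∈ S t
      · rw [hWdef]; simp only [if_pos h]; exact min_le_right _ _
      · rw [hWdef]; simp only [if_neg h]; exact le_rfl
    -- measurability of the X part via right limits along rationals
    have hXS : ∀ t ∈ Set.Icc (0:ℝ) T, StronglyMeasurable[𝓕 t] ((S t).indicator (X t)) := by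
      intro t ht
      by_cases htT : t = T
      · subst htT
        have heq : (S t).indicator (X t) = (S t).indicator (condExp (𝓕 t) μ (X t)) := by
          funext ω
          by_cases h : ω ∈ S t
          · rw [Set.indicator_of_mem h, Set.indicator_of_mem h]
            have hmem := (hSmem t ω).1 h
            exact (hNgood ω hmem.2.2).2 hmem.2.1
          · rw [Set.indicator_of_notMem h, Set.indicator_of_notMem h]
        rw [heq]
        exact stronglyMeasurable_condExp.indicator (hSF t)
      · have htT' : t < T := lt_of_le_of_ne ht.2 htT
        have hex : ∀ k : ℕ, ∃ r : ℚ, t < r ∧ (r : ℝ) < min (t + 1/((k:ℝ)+1)) T := by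
          intro k
          refine exists_rat_btwn (lt_min ?_ htT')
          have h1 : (0:ℝ) < 1/((k:ℝ)+1) := by positivity
          linarith
        choose q hq1 hq2 using hex
        have hqT : ∀ k, (q k : ℝ) < T := fun k => lt_of_lt_of_le (hq2 k) (min_le_right _ _)
        have hq0 : ∀ k, (0:ℝ) ≤ (q k : ℝ) := fun k => le_of_lt (lt_of_le_of_lt ht.1 (hq1 k))
        have hqmem : ∀ k, (q k : ℝ) ∈ Set.Icc (0:ℝ) T :=
          fun k => ⟨hq0 k, le_of_lt (hqT k)⟩
        have htend : Tendsto (fun k : ℕ => (q k : ℝ)) atTop (nhds t) := by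
          have h1 : Tendsto (fun k : ℕ => t + 1/((k:ℝ)+1)) atTop (nhds t) := by
            have h2 := tendsto_one_div_add_atTop_nhds_zero_nat (𝕜 := ℝ)
            have h3 := (tendsto_const_nhds (x := t) (f := (atTop : Filter ℕ))).add h2
            simpa using h3
          refine tendsto_of_tendsto_of_tendsto_of_le_of_le tendsto_const_nhds h1
            (fun k => le_of_lt (hq1 k))
            (fun k => le_of_lt (lt_of_lt_of_le (hq2 k) (min_le_left _ _)))
        set F : ℕ → Ω → ℝ := fun k => (S t).indicator (condExp (𝓕 ((q k : ℝ))) μ (X (q k))) with hF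
        have hFm : ∀ k, StronglyMeasurable[𝓕 ((q k : ℝ))] (F k) := fun k =>
          stronglyMeasurable_condExp.indicator ((𝓕.mono (le_of_lt (hq1 k))) _ (hSF t))
        have hlim : ∀ ω, Tendsto (fun k => F k ω) atTop (nhds ((S t).indicator (X t) ω)) := by
          intro ω
          by_cases h : ω ∈ S t
          · have hmem := (hSmem t ω).1 h
            have hFX : ∀ k, F k ω = X (q k) ω := by
              intro k
              simp only [hF]
              rw [Set.indicator_of_mem h]
              exact ((hNgood ω hmem.2.2).1 (q k) (hqmem k)
                (le_trans hmem.2.1 (le_of_lt (hq1 k)))).symm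
            rw [Set.indicator_of_mem h]
            have hrc' := (hXc ω).1 t ⟨ht.1, htT'⟩
            have htend' : Tendsto (fun k : ℕ => (q k : ℝ)) atTop
                (nhdsWithin t (Set.Ioi t ∩ Set.Icc 0 T)) := by
              refine tendsto_nhdsWithin_iff.2 ⟨htend, ?_⟩
              filter_upwards with k
              exact ⟨hq1 k, hqmem k⟩
            have hcomp := hrc'.comp htend'
            exact Tendsto.congr (fun k => (hFX k).symm) hcomp
          · have hF0 : ∀ k, F k ω = 0 := fun k => by
              simp only [hF]; exact Set.indicator_of_notMem h _
            rw [Set.indicator_of_notMem h]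
            have heq0 : (fun k => F k ω) = fun _ => 0 := funext hF0
            rw [heq0]
            exact tendsto_const_nhds
        have hkey : ∀ u : ℝ, t < u → StronglyMeasurable[𝓕 u] ((S t).indicator (X t)) := by
          intro u hu
          obtain ⟨K, hK⟩ := Filter.eventually_atTop.1 (htend.eventually_lt_const hu)
          refine stronglyMeasurable_of_tendsto (u := atTop) (f := fun k => F (k + K))
            (fun k => (hFm (k + K)).mono
              (𝓕.mono (le_of_lt (hK (k + K) (Nat.le_add_left K k))))) ?_
          rw [tendsto_pi_nhds]
          intro ω
          exact (hlim ω).comp (tendsto_add_atTop_nat K)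
        have hmeas : Measurable[𝓕 t] ((S t).indicator (X t)) := by
          rw [← hrc t]
          intro s hs
          rw [MeasurableSpace.measurableSet_iInf]
          intro u
          rw [MeasurableSpace.measurableSet_iInf]
          intro hu
          exact (hkey u hu).measurable hs
        exact hmeas.stronglyMeasurable
    have hWad : ∀ t ∈ Set.Icc (0:ℝ) T, StronglyMeasurable[𝓕 t] (W t) := by
      intro t ht
      have heq : W t = (S t).piecewise
          (fun ω => min ((S t).indicator (X t) ω) (Z i t ω)) (Z i t) := by
        funext ω
        by_cases h : ω ∈ S t
        · rw [hWdef]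
          simp only [if_pos h, Set.piecewise_eq_of_mem _ _ _ h, Set.indicator_of_mem h]
        · rw [hWdef]
          simp only [if_neg h, Set.piecewise_eq_of_notMem _ _ _ h]
      rw [heq]
      exact StronglyMeasurable.piecewise (hSF t)
        (((hXS t ht).measurable.min (hZad i t ht).measurable).stronglyMeasurable)
        (hZad i t ht)
    have hWint : ∀ t ∈ Set.Icc (0:ℝ) T, Integrable (W t) μ := by
      intro t ht
      refine Integrable.mono' ((hXi t ht).abs.add (hZint i t ht).abs)
        (((hWad t ht).mono (𝓕.le t)).aestronglyMeasurable) ?_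
      filter_upwards with ω
      simp only [Pi.add_apply]
      have hZb : |Z i t ω| ≤ |X t ω| + |Z i t ω| := by
        have := abs_nonneg (X t ω); linarith
      by_cases h : ω ∈ S t
      · rw [hWdef]
        simp only [if_pos h, Real.norm_eq_abs]
        refine le_trans abs_min_le_max_abs_abs (max_le ?_ hZb)
        have := abs_nonneg (Z i t ω); linarith
      · rw [hWdef]
        simp only [if_neg h, Real.norm_eq_abs]
        exact hZb
    have hWsuper : ∀ s t : ℝ, s ∈ Set.Icc (0:ℝ) T → t ∈ Set.Icc (0:ℝ) T → s ≤ t →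
        condExp (𝓕 s) μ (W t) ≤ᵐ[μ] W s := by
      intro s t hs ht hst
      have hm : 𝓕 s ≤ mΩ := 𝓕.le s
      haveI : SigmaFinite (μ.trim hm) := inferInstance
      have hWZ : W t ≤ᵐ[μ] Z i t := Filter.Eventually.of_forall fun ω => hWleZ t ω
      have g1 : condExp (𝓕 s) μ (W t) ≤ᵐ[μ] condExp (𝓕 s) μ (Z i t) :=
        condExp_mono (hWint t ht) (hZint i t ht) hWZ
      have g2 := hZsuper i s t hs ht hst
      have hEF : MeasurableSet[𝓕 s] (S s) := hSF s
      have hEm : MeasurableSet (S s) := hSm s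
      have e1 : condExp (𝓕 s) μ ((S s).indicator (W t))
          =ᵐ[μ] (S s).indicator (condExp (𝓕 s) μ (W t)) :=
        condExp_indicator (hWint t ht) hEF
      have e2 : (S s).indicator (W t) ≤ᵐ[μ] (S s).indicator (X t) := by
        filter_upwards with ω
        by_cases h : ω ∈ S s
        · rw [Set.indicator_of_mem h, Set.indicator_of_mem h]
          have hSt : ω ∈ S t := hSmono s t hst h
          rw [hWdef]; simp only [if_pos hSt]; exact min_le_left _ _
        · rw [Set.indicator_of_notMem h, Set.indicator_of_notMem h]
      have e3 : condExp (𝓕 s) μ ((S s).indicator (W t))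
          ≤ᵐ[μ] condExp (𝓕 s) μ ((S s).indicator (X t)) :=
        condExp_mono ((hWint t ht).indicator hEm) ((hXi t ht).indicator hEm) e2
      have e4 : condExp (𝓕 s) μ ((S s).indicator (X t))
          =ᵐ[μ] (S s).indicator (condExp (𝓕 s) μ (X t)) :=
        condExp_indicator (hXi t ht) hEF
      have e5 := hXs s t hs ht hst
      filter_upwards [g1, g2, e1, e3, e4, e5] with ω hg1 hg2 he1 he3 he4 he5
      have hZbound : condExp (𝓕 s) μ (W t) ω ≤ Z i s ω := le_trans hg1 hg2
      by_cases h : ω ∈ S s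
      · have hWs : W s ω = min (X s ω) (Z i s ω) := by
          rw [hWdef]; simp only [if_pos h]
        have hXbound : condExp (𝓕 s) μ (W t) ω ≤ X s ω := by
          have h1 : condExp (𝓕 s) μ (W t) ω
              = (S s).indicator (condExp (𝓕 s) μ (W t)) ω :=
            (Set.indicator_of_mem h _).symm
          rw [h1, ← he1]
          calc condExp (𝓕 s) μ ((S s).indicator (W t)) ω
              ≤ condExp (𝓕 s) μ ((S s).indicator (X t)) ω := he3
            _ = (S s).indicator (condExp (𝓕 s) μ (X t)) ω := he4
            _ = condExp (𝓕 s) μ (X t) ω := Set.indicator_of_mem h _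
            _ ≤ X s ω := he5 ((hSmem s ω).1 h).2.1
        rw [hWs]; exact le_min hXbound hZbound
      · have hWs : W s ω = Z i s ω := by rw [hWdef]; simp only [if_neg h]
        rw [hWs]; exact hZbound
    have hWdom : ∀ t ∈ Set.Icc (0:ℝ) T, U i t ≤ᵐ[μ] W t := by
      intro t ht
      filter_upwards [hZdom i t ht, hXd t ht] with ω h1 h2
      by_cases h : ω ∈ S t
      · have hmem := (hSmem t ω).1 h
        have h2' := h2 hmem.2.1
        have hsum : ∑ j, Set.indicator (A j) (fun _ => U j t ω) ω = U i t ω := by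
          rw [Finset.sum_eq_single i]
          · rw [hind, Set.indicator_of_mem hmem.1]
          · intro b _ hbi
            rw [hind]
            refine Set.indicator_of_notMem ?_ _
            exact fun hb => Set.disjoint_left.1 (hAdisj hbi) hb hmem.1
          · intro hi'; exact absurd (Finset.mem_univ i) hi'
        rw [hWdef]
        simp only [if_pos h]
        exact le_min (hsum ▸ h2') h1
      · rw [hWdef]; simp only [if_neg h]; exact h1
    have hWcad : ∀ ω, CadlagOn (fun t => W t ω) T := by
      intro ω
      by_cases hω : ω ∈ A i ∧ ω ∉ N
      case neg =>
        have hpath : (fun u => W u ω) = fun u => Z i u ω := by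
          funext u; simp only [hWdef]
          exact if_neg fun hS => hω ⟨hS.1.1, hS.2⟩
        rw [hpath]; exact hZcad i ω
      case pos =>
        obtain ⟨hA, hN⟩ := hω
        have hpath : ∀ u : ℝ, W u ω
            = if θ ω ≤ u then min (X u ω) (Z i u ω) else Z i u ω := by
          intro u; simp only [hWdef]
          by_cases h : θ ω ≤ u
          · rw [if_pos ((hSmem u ω).2 ⟨hA, h, hN⟩), if_pos h]
          · rw [if_neg (fun hS => h ((hSmem u ω).1 hS).2.1), if_neg h]
        constructor
        · intro t ht
          have hXr := (hXc ω).1 t ht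
          have hZr := (hZcad i ω).1 t ht
          by_cases hθt : θ ω ≤ t
          · have hval : W t ω = min (X t ω) (Z i t ω) := by rw [hpath, if_pos hθt]
            have hev : (fun u => min (X u ω) (Z i u ω))
                =ᶠ[nhdsWithin t (Set.Ioi t ∩ Set.Icc 0 T)] fun u => W u ω := by
              filter_upwards [self_mem_nhdsWithin] with u hu
              rw [hpath u, if_pos (le_trans hθt (le_of_lt hu.1))]
            simp only [hval]
            exact Tendsto.congr' hev (hXr.min hZr)
          · have hlt : t < θ ω := lt_of_not_ge hθt
            have hval : W t ω = Z i t ω := by rw [hpath, if_neg hθt]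
            have hev : (fun u => Z i u ω)
                =ᶠ[nhdsWithin t (Set.Ioi t ∩ Set.Icc 0 T)] fun u => W u ω := by
              filter_upwards [nhdsWithin_le_nhds (Iio_mem_nhds hlt)] with u hu
              rw [hpath u, if_neg (not_le.2 hu)]
            simp only [hval]
            exact Tendsto.congr' hev hZr
        · intro t ht
          obtain ⟨Lz, hLz⟩ := (hZcad i ω).2 t ht
          by_cases hθt : θ ω < t
          · obtain ⟨Lx, hLx⟩ := (hXc ω).2 t ht
            refine ⟨min Lx Lz, ?_⟩
            have hev : (fun u => min (X u ω) (Z i u ω))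
                =ᶠ[nhdsWithin t (Set.Iio t ∩ Set.Icc 0 T)] fun u => W u ω := by
              filter_upwards [nhdsWithin_le_nhds (Ioi_mem_nhds hθt)] with u hu
              rw [hpath u, if_pos (le_of_lt hu)]
            exact Tendsto.congr' hev (hLx.min hLz)
          · refine ⟨Lz, ?_⟩
            have hev : (fun u => Z i u ω)
                =ᶠ[nhdsWithin t (Set.Iio t ∩ Set.Icc 0 T)] fun u => W u ω := by
              filter_upwards [self_mem_nhdsWithin] with u hu
              have hu' : u < θ ω := lt_of_lt_of_le hu.1 (not_lt.1 hθt)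
              rw [hpath u, if_neg (not_le.2 hu')]
            exact Tendsto.congr' hev hLz
    -- apply minimality of the Snell envelope
    intro t₀ ht₀
    have hmin := hZmin i W hWcad ⟨hWad, hWint, hWsuper⟩ hWdom t₀ ht₀
    have hNae : ∀ᵐ ω ∂μ, ω ∉ N := measure_eq_zero_iff_ae_notMem.1 hNnull
    filter_upwards [hmin, hNae] with ω h1 h2 hθt hA
    have hS : ω ∈ S t₀ := (hSmem t₀ ω).2 ⟨hA, hθt, h2⟩
    have : W t₀ ω = min (X t₀ ω) (Z i t₀ ω) := by rw [hWdef]; simp only [if_pos hS]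
    calc Z i t₀ ω ≤ W t₀ ω := h1
      _ ≤ X t₀ ω := by rw [this]; exact min_le_left _ _

end OptSwitch
end
end
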